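/- arXiv:1709.04566 — 5 statements merged into one kernel-verified Lean document; each statement's English description precedes it below -/
import Mathlib

section
/- For a polynomial f in F_q[x] and b in F_q with b ≠ 0, f(x+b) = f(x) if and only if f(x) = g(x^p - b^{p-1} x) for some polynomial g in F_q[x], where p is the characteristic of F_q. -/
open Polynomial

/-
Write `T = X ^ p - b ^ (p - 1) X`. Since `(X + b) ^ p = X ^ p + b ^ p`, the shift
`taylor b : f ↦ f(X + b)` fixes `T`, so by uniqueness of division with remainder it commutes
with taking quotient and remainder modulo the monic `T`. Hence if `f` is shift invariant then so
are `f /ₘ T` and `f %ₘ T`. The remainder has degree `< p` and takes the same value at the `p`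
distinct points `k b`, `0 ≤ k < p`, so it is a constant; induction on the degree applied to the
quotient then writes `f` as a polynomial in `T`.
-/

section Taylor

variable {R : Type*} [CommRing R] {b : R}

lemma eval_natCast_mul_of_taylor_eq {f : R[X]} (hf : taylor b f = f) (n : ℕ) :
    f.eval (n * b) = f.eval 0 := by
  induction n with
  | zero => simp
  | succ n ih => rw [Nat.cast_succ, add_one_mul, ← taylor_eval, hf, ih]

lemma taylor_divByMonic_modByMonic {T : R[X]} (hT : T.Monic) (hTb : taylor b T = T)
    (f : R[X]) :
    taylor b f /ₘ T = taylor b (f /ₘ T) ∧ taylor b f %ₘ T = taylor b (f %ₘ T) := by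
  nontriviality R
  refine div_modByMonic_unique _ _ hT ⟨?_, ?_⟩
  · conv_rhs => rw [← modByMonic_add_div f T]
    rw [map_add, taylor_mul, hTb]
  · rw [degree_taylor]
    exact degree_modByMonic_lt f hT

lemma taylor_divByMonic_eq {T f : R[X]} (hT : T.Monic) (hTb : taylor b T = T)
    (hf : taylor b f = f) : taylor b (f /ₘ T) = f /ₘ T := by
  conv_rhs => rw [← hf]
  exact ((taylor_divByMonic_modByMonic hT hTb f).1).symm

lemma taylor_modByMonic_eq {T f : R[X]} (hT : T.Monic) (hTb : taylor b T = T)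
    (hf : taylor b f = f) : taylor b (f %ₘ T) = f %ₘ T := by
  conv_rhs => rw [← hf]
  exact ((taylor_divByMonic_modByMonic hT hTb f).2).symm

end Taylor

section CharP

variable {p : ℕ} {F : Type*} [Field F] [CharP F p] {b : F}

lemma eq_C_of_taylor_eq_of_natDegree_lt (hb : b ≠ 0) {r : F[X]} (hr : taylor b r = r)
    (hd : r.natDegree < p) : r = C (r.eval 0) := by
  have hinj : Function.Injective fun k : Fin p ↦ ((k : ℕ) : F) * b := by
    intro i j hij
    have hij' : ((i : ℕ) : F) = ((j : ℕ) : F) := mul_right_cancel₀ hb hij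
    rw [CharP.natCast_eq_natCast F p] at hij'
    exact Fin.ext (Nat.ModEq.eq_of_lt_of_lt hij' i.2 j.2)
  refine eq_of_natDegree_lt_card_of_eval_eq _ _ hinj (fun k ↦ ?_) ?_
  · simp [eval_natCast_mul_of_taylor_eq hr]
  · simpa using hd

end CharP

/-- `X ^ p - b ^ (p - 1) X = b ^ p ((X / b) ^ p - X / b)`: a rescaled Artin–Schreier
polynomial. -/
noncomputable def artinSchreierPoly {R : Type*} [CommRing R] (p : ℕ) (b : R) : R[X] :=
  X ^ p - C (b ^ (p - 1)) * X

section ArtinSchreier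

variable {p : ℕ} [hp : Fact p.Prime]

lemma artinSchreierPoly_monic {R : Type*} [CommRing R] (b : R) :
    (artinSchreierPoly p b).Monic := by
  nontriviality R
  refine monic_X_pow_sub ((degree_C_mul_X_le _).trans_lt ?_)
  exact_mod_cast hp.out.one_lt

lemma natDegree_artinSchreierPoly {R : Type*} [CommRing R] [Nontrivial R] (b : R) :
    (artinSchreierPoly p b).natDegree = p := by
  rw [artinSchreierPoly, natDegree_sub_eq_left_of_natDegree_lt, natDegree_X_pow]
  rw [natDegree_X_pow]
  exact (natDegree_C_mul_le _ _).trans_lt (natDegree_X_le.trans_lt hp.out.one_lt)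

lemma taylor_artinSchreierPoly {R : Type*} [CommRing R] [CharP R p] (b : R) :
    taylor b (artinSchreierPoly p b) = artinSchreierPoly p b := by
  have hbb : b ^ (p - 1) * b = b ^ p := by
    rw [← pow_succ, Nat.sub_add_cancel hp.out.one_le]
  rw [artinSchreierPoly, map_sub, taylor_mul, taylor_X_pow, taylor_C, taylor_X, add_pow_char,
    ← C_pow, mul_add, ← C_mul, hbb]
  ring

end ArtinSchreier

section Main

variable {p : ℕ} [hp : Fact p.Prime] {F : Type*} [Field F] [CharP F p] {b : F}

lemma exists_eq_comp_artinSchreierPoly_of_taylor_eq (hb : b ≠ 0) (f : F[X])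
    (hf : taylor b f = f) : ∃ g : F[X], f = g.comp (artinSchreierPoly p b) := by
  induction hn : f.natDegree using Nat.strong_induction_on generalizing f with
  | _ n ih =>
  set T := artinSchreierPoly p b
  have hT : T.Monic := artinSchreierPoly_monic b
  have hTb : taylor b T = T := taylor_artinSchreierPoly b
  have hTd : T.natDegree = p := natDegree_artinSchreierPoly b
  rcases Nat.eq_zero_or_pos n with rfl | hn0
  · exact ⟨C (f.coeff 0), by rw [C_comp, ← eq_C_of_natDegree_eq_zero hn]⟩
  have hr : f %ₘ T = C ((f %ₘ T).eval 0) := by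
    refine eq_C_of_taylor_eq_of_natDegree_lt hb (taylor_modByMonic_eq hT hTb hf) ?_
    rw [← hTd]
    exact natDegree_modByMonic_lt f hT fun h ↦ hp.out.ne_zero (by simpa [h] using hTd.symm)
  have hq : (f /ₘ T).natDegree < n := by
    rw [natDegree_divByMonic f hT, hn, hTd]
    exact Nat.sub_lt hn0 hp.out.pos
  obtain ⟨g, hg⟩ := ih _ hq (f /ₘ T) (taylor_divByMonic_eq hT hTb hf) rfl
  refine ⟨C ((f %ₘ T).eval 0) + X * g, ?_⟩
  rw [add_comp, mul_comp, C_comp, X_comp, ← hg, ← hr, modByMonic_add_div]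

end Main

theorem stmt0_general (p : ℕ) [Fact p.Prime] (F : Type*) [Field F] [CharP F p]
    (b : F) (hb : b ≠ 0) (f : F[X]) :
    f.comp (X + C b) = f ↔ ∃ g : F[X], f = g.comp (X ^ p - C (b ^ (p - 1)) * X) := by
  rw [← taylor_apply]
  constructor
  · exact exists_eq_comp_artinSchreierPoly_of_taylor_eq hb f
  · rintro ⟨g, rfl⟩
    rw [taylor_apply, comp_assoc, ← taylor_apply]
    exact congrArg g.comp (taylor_artinSchreierPoly b)

/-- For a polynomial `f ∈ F_q[x]` and `b ≠ 0` in `F_q`, `f(x+b) = f(x)` iff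
`f(x) = g(x^p - b^(p-1) x)` for some `g`, where `p = char F_q`. -/
theorem stmt0 (p : ℕ) [Fact p.Prime] (F : Type*) [Field F] [Fintype F] [CharP F p]
    (b : F) (hb : b ≠ 0) (f : F[X]) :
    f.comp (X + C b) = f ↔ ∃ g : F[X], f = g.comp (X ^ p - C (b ^ (p - 1)) * X) :=
  stmt0_general p F b hb f
end

section
/- Let φ be the F_q-automorphism of F_q[x_1,...,x_n] (n ≥ 2) given by x_i ↦ x_i + 1 for 1 ≤ i ≤ t (where 2 ≤ t ≤ n) and x_i ↦ x_i for i > t. Then the subring of polynomials fixed by φ equals the F_q-subalgebra generated by x_1 - x_2, x_2 - x_3, ..., x_{t-1} - x_t, x_t^p - x_t, x_{t+1}, ..., x_n. -/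
/-!
A polynomial `f ∈ A[X]` over a domain of characteristic `p` with `f(X + 1) = f` takes the value
`f(0)` at `0, 1, …, p - 1`, so `f - f(0)` is divisible by `X^p - X = ∏ (X - k)`; the quotient is
again shift-invariant and of smaller degree, hence by induction `f ∈ A[X^p - X]`. Viewing
`F[x_1, …, x_n]` as polynomials in `x_t` over the other variables gives the fixed ring of
`x_t ↦ x_t + 1` alone. The linear change of variables `x_i ↦ x_i - x_t` (`i < t`) intertwines
that shift with `φ` and carries the generators `x_i` to `x_i - x_t`, which generate the same
algebra as the consecutive differences `x_i - x_{i+1}`.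
-/

namespace Polynomial

section XPowSubX

variable {R : Type*} [Ring R] {n : ℕ}

theorem monic_X_pow_sub_X (hn : 1 < n) : (X ^ n - X : R[X]).Monic :=
  monic_X_pow_sub (degree_X_le.trans_lt (by exact_mod_cast hn))

theorem natDegree_X_pow_sub_X [Nontrivial R] (hn : 1 < n) : (X ^ n - X : R[X]).natDegree = n := by
  rw [natDegree_sub_eq_left_of_natDegree_lt] <;> simp [hn]

end XPowSubX

variable {A : Type*} [CommRing A]

theorem eval_natCast_eq_eval_zero_of_comp_X_add_one {f : A[X]} (hf : f.comp (X + 1) = f)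
    (k : ℕ) : f.eval (k : A) = f.eval 0 := by
  induction k with
  | zero => simp
  | succ k ih =>
    rw [← ih, Nat.cast_succ]
    conv_rhs => rw [← hf]
    simp [eval_comp]

variable {p : ℕ} [Fact p.Prime] [CharP A p]

theorem X_pow_char_sub_X_comp_X_add_one : (X ^ p - X : A[X]).comp (X + 1) = X ^ p - X := by
  rw [sub_comp, pow_comp, X_comp, add_pow_char, one_pow]
  ring

variable [IsDomain A]

theorem X_pow_char_sub_X_dvd_of_eval_natCast {g : A[X]}
    (hg : ∀ k : ℕ, g.eval (k : A) = 0) : X ^ p - X ∣ g := by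
  have hp : 1 < p := (Fact.out : p.Prime).one_lt
  have hu : (X ^ p - X : A[X]).Monic := monic_X_pow_sub_X hp
  set φ := ZMod.castHom (dvd_refl p) A
  rw [← modByMonic_eq_zero_iff_dvd hu]
  -- the remainder has degree `< p` and vanishes on the `p` points of the image of `ZMod p`
  refine eq_zero_of_natDegree_lt_card_of_eval_eq_zero _ φ.injective (fun a => ?_) ?_
  · have hroot : (X ^ p - X : A[X]).eval (φ a) = 0 := by
      simp [← map_pow, ZMod.pow_card]
    have hφ : φ a = ((a.val : ℕ) : A) := ZMod.cast_eq_val a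
    rw [modByMonic_eq_sub_mul_div, eval_sub, eval_mul, hroot, hφ, hg]
    ring
  · have hu1 : X ^ p - X ≠ (1 : A[X]) := fun h => by
      have := natDegree_X_pow_sub_X (R := A) hp
      rw [h, natDegree_one] at this
      omega
    simpa [ZMod.card, natDegree_X_pow_sub_X hp] using natDegree_modByMonic_lt g hu hu1

theorem mem_adjoin_X_pow_char_sub_X_of_comp_X_add_one {R : Type*} [CommSemiring R]
    [Algebra R A] {f : A[X]} (hf : f.comp (X + 1) = f) :
    f ∈ Algebra.adjoin R (insert (X ^ p - X) (Set.range C)) := by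
  induction hd : f.natDegree using Nat.strong_induction_on generalizing f with
  | _ d ih =>
  have hp : 1 < p := (Fact.out : p.Prime).one_lt
  set u : A[X] := X ^ p - X
  have hu : u ≠ 0 := (monic_X_pow_sub_X hp).ne_zero
  obtain ⟨q, hq⟩ : u ∣ f - C (f.eval 0) := X_pow_char_sub_X_dvd_of_eval_natCast fun k => by
    simp [eval_natCast_eq_eval_zero_of_comp_X_add_one hf]
  have hqfix : q.comp (X + 1) = q := by
    refine mul_left_cancel₀ hu ?_
    calc u * q.comp (X + 1) = (u * q).comp (X + 1) := by
          rw [mul_comp, X_pow_char_sub_X_comp_X_add_one]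
      _ = u * q := by rw [← hq, sub_comp, hf, C_comp]
  rw [show f = C (f.eval 0) + u * q by rw [← hq]; ring]
  refine add_mem (Algebra.subset_adjoin (.inr ⟨_, rfl⟩))
    (mul_mem (Algebra.subset_adjoin (.inl rfl)) ?_)
  rcases eq_or_ne q 0 with rfl | hq0
  · exact zero_mem _
  refine ih q.natDegree ?_ hqfix rfl
  have := congrArg natDegree hq
  rw [natDegree_sub_C, natDegree_mul hu hq0, natDegree_X_pow_sub_X hp] at this
  omega

end Polynomial

namespace MvPolynomial

variable {σ R : Type*} [CommRing R]

noncomputable def translate (a : σ → R) : MvPolynomial σ R →ₐ[R] MvPolynomial σ R :=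
  aeval fun i => X i + C (a i)

@[simp]
theorem translate_X (a : σ → R) (i : σ) : translate a (X i) = X i + C (a i) :=
  aeval_X _ _

noncomputable def transvection (j : σ) (c : σ → R) (hc : c j = 0) :
    MvPolynomial σ R ≃ₐ[R] MvPolynomial σ R :=
  AlgEquiv.ofAlgHom (aeval fun i => X i + C (c i) * X j) (aeval fun i => X i - C (c i) * X j)
    (algHom_ext fun i => by simp [hc]) (algHom_ext fun i => by simp [hc])

@[simp]
theorem transvection_X (j : σ) (c : σ → R) (hc : c j = 0) (i : σ) :
    transvection j c hc (X i) = X i + C (c i) * X j :=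
  aeval_X _ _

theorem X_sub_X_mem_of_forall_X_sub_X_succ_mem {S : Type*} {n : ℕ}
    [SetLike S (MvPolynomial (Fin n) R)] [AddSubgroupClass S (MvPolynomial (Fin n) R)] {M : S}
    {i m : ℕ} (hm : m < n) (him : i ≤ m)
    (h : ∀ k (hk : k < m), X (⟨k, by omega⟩ : Fin n) - X ⟨k + 1, by omega⟩ ∈ M) :
    X (⟨i, by omega⟩ : Fin n) - X ⟨m, hm⟩ ∈ M := by
  induction m, him using Nat.le_induction with
  | base => simp
  | succ m him ih =>
    rw [← sub_add_sub_cancel _ (X ⟨m, by omega⟩)]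
    exact add_mem (ih (by omega) fun k hk => h k (by omega)) (h m (by omega))

variable [DecidableEq σ]

noncomputable def equivPolynomialOfVar (j : σ) :
    MvPolynomial σ R ≃ₐ[R] Polynomial (MvPolynomial {i // i ≠ j} R) :=
  (renameEquiv R (Equiv.optionSubtypeNe j).symm).trans (optionEquivLeft R _)

@[simp]
theorem equivPolynomialOfVar_X_self (j : σ) : equivPolynomialOfVar (R := R) j (X j) = .X := by
  simp [equivPolynomialOfVar, optionEquivLeft_X_none]

theorem equivPolynomialOfVar_X_of_ne {i j : σ} (h : i ≠ j) :
    equivPolynomialOfVar (R := R) j (X i) = .C (X ⟨i, h⟩) := by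
  simp [equivPolynomialOfVar, Equiv.optionSubtypeNe_symm_of_ne h, optionEquivLeft_X_some]

theorem equivPolynomialOfVar_rename_val (j : σ) (b : MvPolynomial {i // i ≠ j} R) :
    equivPolynomialOfVar j (rename Subtype.val b) = .C b := by
  have : (equivPolynomialOfVar j).toAlgHom.comp (rename Subtype.val) =
      IsScalarTower.toAlgHom R (MvPolynomial {i // i ≠ j} R) _ :=
    algHom_ext fun i => by simp [equivPolynomialOfVar_X_of_ne i.2]
  exact DFunLike.congr_fun this b

theorem equivPolynomialOfVar_translate_single (j : σ) (g : MvPolynomial σ R) :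
    equivPolynomialOfVar j (translate (Pi.single j 1) g) =
      (equivPolynomialOfVar j g).comp (.X + 1) := by
  have : (equivPolynomialOfVar j).toAlgHom.comp (translate (Pi.single j 1)) =
      ((Polynomial.aeval (.X + 1)).restrictScalars R).comp (equivPolynomialOfVar j).toAlgHom :=
    algHom_ext fun i => by
      rcases eq_or_ne i j with rfl | h
      · simp
      · simp [equivPolynomialOfVar_X_of_ne h, h]
  exact DFunLike.congr_fun this g

variable {p : ℕ} [Fact p.Prime] [CharP R p] [IsDomain R]

theorem translate_single_eq_self_iff (j : σ) (f : MvPolynomial σ R) :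
    translate (Pi.single j 1) f = f ↔
      f ∈ Algebra.adjoin R (insert (X j ^ p - X j) (X '' {j}ᶜ)) := by
  set e := equivPolynomialOfVar (R := R) j
  constructor
  · intro hf
    have hef := Polynomial.mem_adjoin_X_pow_char_sub_X_of_comp_X_add_one (R := R)
      ((equivPolynomialOfVar_translate_single j f).symm.trans (congrArg e hf))
    have hle : Algebra.adjoin R (insert (.X ^ p - .X) (Set.range Polynomial.C)) ≤
        (Algebra.adjoin R (insert (X j ^ p - X j) (X '' {j}ᶜ))).map e.toAlgHom := by
      rw [Algebra.adjoin_le_iff]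
      rintro _ (rfl | ⟨b, rfl⟩)
      · exact ⟨_, Algebra.subset_adjoin (Set.mem_insert _ _), by simp [e]⟩
      · refine ⟨_, ?_, equivPolynomialOfVar_rename_val j b⟩
        have : rename Subtype.val b ∈ Algebra.adjoin R (X '' {j}ᶜ) := by
          rw [← supported_eq_adjoin_X, supported_eq_range_rename]
          exact ⟨b, rfl⟩
        exact Algebra.adjoin_mono (Set.subset_insert _ _) this
    obtain ⟨g, hg, hge⟩ := hle hef
    rwa [← e.injective hge]
  · intro hf
    refine Algebra.adjoin_le (S := AlgHom.equalizer (translate (Pi.single j 1)) (AlgHom.id R _))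
      ?_ hf
    rintro _ (rfl | ⟨i, hi, rfl⟩)
    · simp [add_pow_char]
    · simp [Pi.single_eq_of_ne hi]

theorem translate_eq_self_iff {a : σ → R} {j : σ} (ha : a j = 1) (f : MvPolynomial σ R) :
    translate a f = f ↔ f ∈ Algebra.adjoin R
      (insert (X j ^ p - X j) (Set.range fun i => X i - C (a i) * X j)) := by
  set T := transvection j (fun i => if i = j then 0 else -a i) (by simp)
  have hT : ∀ g, translate a (T g) = T (translate (Pi.single j 1) g) := by
    have : (translate a).comp T.toAlgHom = T.toAlgHom.comp (translate (Pi.single j 1)) :=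
      algHom_ext fun i => by
        rcases eq_or_ne i j with rfl | h
        · simp [T, ha]
        · simp [T, h, ha]
          ring
    exact fun g => DFunLike.congr_fun this g
  have hTG : Algebra.adjoin R (T '' insert (X j ^ p - X j) (X '' {j}ᶜ)) =
      Algebra.adjoin R (insert (X j ^ p - X j) (Set.range fun i => X i - C (a i) * X j)) := by
    rw [← Set.insert_image_compl_eq_range _ j]
    simp only [ha, C_1, one_mul, sub_self]
    rw [Set.insert_comm, Algebra.adjoin_insert_zero, Set.image_insert_eq, Set.image_image]
    congr 2
    · simp [T]
    · refine Set.image_congr fun i hi => ?_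
      simp [T, Set.mem_compl_singleton_iff.mp hi]
      ring
  calc translate a f = f ↔ translate (Pi.single j 1) (T.symm f) = T.symm f := by
        conv_rhs => rw [← T.injective.eq_iff, ← hT, T.apply_symm_apply]
    _ ↔ T.symm f ∈ Algebra.adjoin R (insert (X j ^ p - X j) (X '' {j}ᶜ)) :=
        translate_single_eq_self_iff j _
    _ ↔ _ := by
        rw [← hTG]
        change _ ↔ f ∈ Algebra.adjoin R (T.toAlgHom '' _)
        rw [← AlgHom.map_adjoin]
        exact ⟨fun h => ⟨_, h, T.apply_symm_apply f⟩, fun ⟨g, hg, hgf⟩ => by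
          rw [← hgf]; simpa using hg⟩

end MvPolynomial

open MvPolynomial

/-- Fixed-point subring of the automorphism `x_i ↦ x_i + 1` for `i < t`, `x_i ↦ x_i` for
`i ≥ t` (with `2 ≤ t ≤ n`): it equals the `F_q`-subalgebra generated by
`x_1 - x_2, …, x_{t-1} - x_t, x_t^p - x_t, x_{t+1}, …, x_n`. -/
theorem stmt6 (p : ℕ) [Fact p.Prime] (F : Type*) [Field F] [CharP F p]
    {n : ℕ} (t : ℕ) (ht2 : 2 ≤ t) (htn : t ≤ n) :
    {f : MvPolynomial (Fin n) F |
        aeval (fun i : Fin n => if (i : ℕ) < t then X i + 1 else X i) f = f} =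
      ↑(Algebra.adjoin F
        ({g : MvPolynomial (Fin n) F | ∃ (i : ℕ) (h : i + 1 < t),
            g = X (⟨i, by omega⟩ : Fin n) - X (⟨i + 1, by omega⟩ : Fin n)} ∪
          {X (⟨t - 1, by omega⟩ : Fin n) ^ p - X (⟨t - 1, by omega⟩ : Fin n)} ∪
          {g : MvPolynomial (Fin n) F | ∃ (i : ℕ) (h1 : t ≤ i) (h2 : i < n),
            g = X (⟨i, h2⟩ : Fin n)})) := by
  set j : Fin n := ⟨t - 1, by omega⟩
  set a : Fin n → F := fun i => if (i : ℕ) < t then 1 else 0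
  have hshift : aeval (fun i : Fin n => if (i : ℕ) < t then X i + 1 else X i) =
      MvPolynomial.translate a := by
    unfold MvPolynomial.translate
    congr
    funext i
    split_ifs <;> simp [a, *]
  set G : Set (MvPolynomial (Fin n) F) :=
    insert (X j ^ p - X j) (Set.range fun i => X i - C (a i) * X j)
  have hdiff : ∀ i (hi : i < t), X ⟨i, by omega⟩ - X j ∈ Algebra.adjoin F G := fun i hi =>
    Algebra.subset_adjoin (.inr ⟨⟨i, by omega⟩, by simp [a, hi]⟩)
  ext f
  rw [Set.mem_ofPred_eq, hshift, translate_eq_self_iff (j := j) (by simp [a, j]; omega),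
    SetLike.mem_coe]
  refine Iff.of_eq (congrArg (f ∈ ·) (le_antisymm (Algebra.adjoin_le ?_) (Algebra.adjoin_le ?_)))
  · rintro _ (rfl | ⟨i, rfl⟩)
    · exact Algebra.subset_adjoin (.inl (.inr rfl))
    · by_cases hit : (i : ℕ) < t
      · simp only [a, if_pos hit, C_1, one_mul]
        exact X_sub_X_mem_of_forall_X_sub_X_succ_mem (i := i) _ (by omega)
          fun k hk => Algebra.subset_adjoin (.inl (.inl ⟨k, by omega, rfl⟩))
      · simp only [a, if_neg hit, C_0, zero_mul, sub_zero]
        exact Algebra.subset_adjoin (.inr ⟨i, by omega, i.2, rfl⟩)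
  · rintro _ ((⟨i, hi, rfl⟩ | rfl) | ⟨i, hi, hin, rfl⟩)
    · simpa using sub_mem (hdiff i (by omega)) (hdiff (i + 1) hi)
    · exact Algebra.subset_adjoin (.inl rfl)
    · exact Algebra.subset_adjoin (.inr ⟨⟨i, hin⟩, by simp [a]; omega⟩)
end

section
/- Let φ be the F_q-automorphism of F_q[x_1,...,x_n] given by x_1 ↦ x_1 + 1 and x_i ↦ x_i for i ≥ 2. Then a polynomial f is fixed by φ if and only if f lies in the F_q-subalgebra generated by x_1^p - x_1, x_2, ..., x_n. -/
/-!
Under `finSuccEquiv`, the automorphism becomes the Taylor shift `g(X) ↦ g(X + 1)` of `R[X]`,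
`R = F[x_2, …, x_n]`. A shift-invariant polynomial of degree `< p` is constant, because it takes
the same value at the `p` distinct points `0, 1, …, p - 1`. Dividing an invariant polynomial by
the monic invariant `X^p - X`, uniqueness of division makes quotient and remainder invariant, so
induction on the degree puts it in `R[X^p - X]`.
-/

namespace Polynomial

variable {R : Type*} [CommRing R] (p : ℕ) [CharP R p]

theorem taylor_one_X_pow_sub_X [Fact p.Prime] : taylor (1 : R) (X ^ p - X) = X ^ p - X := by
  simp [add_pow_char]

theorem eval_natCast_eq_eval_zero_of_taylor_one_eq {f : R[X]} (hf : taylor 1 f = f) (k : ℕ) :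
    f.eval (k : R) = f.eval 0 := by
  induction k with
  | zero => simp
  | succ k ih => rw [Nat.cast_succ, ← taylor_eval, hf, ih]

theorem eq_C_of_taylor_one_eq_of_natDegree_lt [IsDomain R] {f : R[X]} (hf : taylor 1 f = f)
    (hdeg : f.natDegree < p) : f = C (f.eval 0) := by
  refine eq_of_natDegree_lt_card_of_eval_eq f _ (f := fun k : Fin p => ((k : ℕ) : R))
    (fun a b hab => Fin.ext (CharP.natCast_injOn_Iio R p a.isLt b.isLt hab)) (fun k => ?_) ?_
  · rw [eval_C, eval_natCast_eq_eval_zero_of_taylor_one_eq hf]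
  · simpa using hdeg

theorem mem_adjoin_X_pow_sub_X_of_taylor_one_eq [Fact p.Prime] [IsDomain R] {f : R[X]}
    (hf : taylor 1 f = f) : f ∈ Algebra.adjoin R {(X ^ p - X : R[X])} := by
  set W : R[X] := X ^ p - X
  have hp : 1 < p := (Fact.out : p.Prime).one_lt
  have hW : W.Monic := monic_X_pow_sub (by rw [degree_X]; exact_mod_cast hp)
  have hWdeg : W.natDegree = p := by
    rw [natDegree_sub_eq_left_of_natDegree_lt] <;> simp [hp]
  induction hN : f.natDegree using Nat.strong_induction_on generalizing f with
  | _ N ih =>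
  obtain hsmall | hlarge := lt_or_ge f.natDegree p
  · rw [eq_C_of_taylor_one_eq_of_natDegree_lt p hf hsmall]
    exact Subalgebra.algebraMap_mem _ _
  have hdiv := modByMonic_add_div f W
  have hshift : taylor 1 (f %ₘ W) + W * taylor 1 (f /ₘ W) = f := by
    conv_rhs => rw [← hf, ← hdiv]
    rw [map_add, taylor_mul, taylor_one_X_pow_sub_X]
  obtain ⟨hquot, hrem⟩ := div_modByMonic_unique _ _ hW
    ⟨hshift, by rw [degree_taylor]; exact degree_modByMonic_lt f hW⟩
  have hquot_mem := ih _ (by rw [natDegree_divByMonic f hW, hWdeg]; omega) hquot.symm rfl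
  have hrem_mem : f %ₘ W ∈ Algebra.adjoin R {W} := by
    rw [eq_C_of_taylor_one_eq_of_natDegree_lt p hrem.symm
      ((natDegree_modByMonic_lt f hW (by rintro h; rw [h, natDegree_one] at hWdeg; omega)).trans_eq
        hWdeg)]
    exact Subalgebra.algebraMap_mem _ _
  rw [← hdiv]
  exact add_mem hrem_mem (mul_mem (Algebra.subset_adjoin rfl) hquot_mem)

theorem taylor_one_eq_self_iff_mem_adjoin_X_pow_sub_X [Fact p.Prime] [IsDomain R] {f : R[X]} :
    taylor 1 f = f ↔ f ∈ Algebra.adjoin R {(X ^ p - X : R[X])} := by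
  refine ⟨mem_adjoin_X_pow_sub_X_of_taylor_one_eq p, fun hf => ?_⟩
  have hle : Algebra.adjoin R {(X ^ p - X : R[X])} ≤
      AlgHom.equalizer (taylorAlgHom 1) (.id R _) :=
    Algebra.adjoin_le (Set.singleton_subset_iff.mpr (taylor_one_X_pow_sub_X p))
  exact hle hf

end Polynomial

namespace MvPolynomial

variable {R : Type*} [CommRing R] {m : ℕ}

theorem finSuccEquiv_aeval_X_zero_add_one (f : MvPolynomial (Fin (m + 1)) R) :
    finSuccEquiv R m (aeval (fun i : Fin (m + 1) => if (i : ℕ) = 0 then X i + 1 else X i) f) =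
      Polynomial.taylor 1 (finSuccEquiv R m f) := by
  suffices h : (finSuccEquiv R m).toAlgHom.comp
      (aeval fun i : Fin (m + 1) => if (i : ℕ) = 0 then X i + 1 else X i) =
      ((Polynomial.taylorAlgHom 1).restrictScalars R).comp (finSuccEquiv R m).toAlgHom from
    AlgHom.congr_fun h f
  refine algHom_ext fun i => Fin.cases ?_ (fun j => ?_) i
  · simp [finSuccEquiv_X_zero]
  · simp [finSuccEquiv_X_succ]

theorem map_finSuccEquiv_adjoin_union_range_X_succ (q : MvPolynomial (Fin (m + 1)) R) :
    (Algebra.adjoin R ({q} ∪ Set.range fun j : Fin m => X j.succ)).map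
        (finSuccEquiv R m).toAlgHom =
      (Algebra.adjoin (MvPolynomial (Fin m) R) {finSuccEquiv R m q}).restrictScalars R := by
  rw [AlgHom.map_adjoin, Algebra.adjoin_eq_adjoin_union R (Set.range X) _ (adjoin_range_X),
    Set.image_union, Set.image_singleton, ← Set.range_comp, ← Set.range_comp, Set.union_comm]
  congr 3
  ext j
  simp [finSuccEquiv_X_succ]

theorem setOf_eq_X_of_one_le_eq_range_X_succ :
    {g : MvPolynomial (Fin (m + 1)) R |
        ∃ (i : ℕ) (_ : 1 ≤ i) (h : i < m + 1), g = X ⟨i, h⟩} =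
      Set.range fun j : Fin m => X j.succ := by
  ext g
  constructor
  · rintro ⟨i, hi, h, rfl⟩
    exact ⟨⟨i - 1, by omega⟩, congrArg X (Fin.ext (Nat.sub_add_cancel hi))⟩
  · rintro ⟨j, rfl⟩
    exact ⟨j + 1, by omega, by omega, rfl⟩

end MvPolynomial

open MvPolynomial

theorem stmt7_general (p : ℕ) [Fact p.Prime] (F : Type*) [Field F] [CharP F p]
    {n : ℕ} (hn : 0 < n) (f : MvPolynomial (Fin n) F) :
    aeval (fun i : Fin n => if (i : ℕ) = 0 then X i + 1 else X i) f = f ↔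
      f ∈ Algebra.adjoin F
        ({X (⟨0, hn⟩ : Fin n) ^ p - X (⟨0, hn⟩ : Fin n)} ∪
          {g : MvPolynomial (Fin n) F | ∃ (i : ℕ) (h1 : 1 ≤ i) (h2 : i < n),
            g = X (⟨i, h2⟩ : Fin n)}) := by
  obtain ⟨m, rfl⟩ : ∃ m, n = m + 1 := ⟨n - 1, by omega⟩
  set e := finSuccEquiv F m
  have he : e (X 0 ^ p - X 0) = Polynomial.X ^ p - Polynomial.X := by
    simp [e, finSuccEquiv_X_zero]
  rw [show (⟨0, hn⟩ : Fin (m + 1)) = 0 from rfl, setOf_eq_X_of_one_le_eq_range_X_succ,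
    ← e.injective.eq_iff, finSuccEquiv_aeval_X_zero_add_one,
    Polynomial.taylor_one_eq_self_iff_mem_adjoin_X_pow_sub_X p, ← he,
    ← Subalgebra.mem_restrictScalars F, ← map_finSuccEquiv_adjoin_union_range_X_succ,
    Subalgebra.mem_map]
  exact ⟨fun ⟨x, hx, hxf⟩ => e.injective hxf ▸ hx, fun hf => ⟨f, hf, rfl⟩⟩

/-- Fixed-point subring of the automorphism `x_1 ↦ x_1 + 1`, `x_i ↦ x_i` for `i ≥ 2`:
`f` is fixed iff `f` lies in the subalgebra generated by `x_1^p - x_1, x_2, …, x_n`. -/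
theorem stmt7 (p : ℕ) [Fact p.Prime] (F : Type*) [Field F] [Fintype F] [CharP F p]
    {n : ℕ} (hn : 0 < n) (f : MvPolynomial (Fin n) F) :
    aeval (fun i : Fin n => if (i : ℕ) = 0 then X i + 1 else X i) f = f ↔
      f ∈ Algebra.adjoin F
        ({X (⟨0, hn⟩ : Fin n) ^ p - X (⟨0, hn⟩ : Fin n)} ∪
          {g : MvPolynomial (Fin n) F | ∃ (i : ℕ) (h1 : 1 ≤ i) (h2 : i < n),
            g = X (⟨i, h2⟩ : Fin n)}) :=
  stmt7_general p F hn f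
end

section
/- Every minimal product-one sequence of length m in the cyclic group C_m of order m is of the form (g, g, ..., g) for some generator g of C_m. In particular, the Davenport constant of C_m is m. -/
/-!
If no proper nonempty subsequence of `a₀, …, a_{k-1}` has product one, the prefix products
`∏_{t < j} a t` are pairwise distinct, so `k ≤ |H|`. When `k = |H|` they exhaust `H`, and so do
those of the sequence with two adjacent terms swapped. The two lists of prefix products differ in
at most one place, so they coincide, which forces the swapped terms to be equal. Hence the
sequence is constant `g`, and minimality says exactly that `orderOf g = |H|`.
-/

open Finset Function

namespace Function

lemma apply_eq_of_eqOn_compl_singleton {α β : Type*} {f g : α → β} {y : α}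
    (hf : Surjective f) (hg : Injective g) (h : Set.EqOn f g {y}ᶜ) : f y = g y := by
  obtain ⟨z, hz⟩ := hf (g y)
  obtain rfl | hzy := eq_or_ne z y
  · exact hz
  · exact absurd (hg ((h hzy).symm.trans hz)) hzy

end Function

lemma Fin.prod_Iio_succ {M : Type*} [CommMonoid M] {n : ℕ} (f : Fin (n + 1) → M) (i : Fin n) :
    ∏ t ∈ Iio i.succ, f t = (∏ t ∈ Iio i.castSucc, f t) * f i.castSucc := by
  have : Iio i.succ = insert i.castSucc (Iio i.castSucc) := by
    ext t
    simp only [mem_Iio, mem_insert, Fin.lt_def, Fin.ext_iff, Fin.val_succ, Fin.val_castSucc]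
    omega
  rw [this, prod_insert notMem_Iio_self, mul_comm]

section

variable {H : Type*} [CommGroup H]

def NoProperProdOne {k : ℕ} (a : Fin k → H) : Prop :=
  ∀ s : Finset (Fin k), s.Nonempty → s ≠ univ → ∏ i ∈ s, a i ≠ 1

namespace NoProperProdOne

variable {k : ℕ} {a : Fin k → H}

lemma comp_perm (ha : NoProperProdOne a) (e : Equiv.Perm (Fin k)) : NoProperProdOne (a ∘ e) := by
  intro s hs hsu
  have := ha (s.map e.toEmbedding) hs.map fun h => hsu ?_
  · rwa [prod_map] at this
  · rwa [← map_univ_equiv e, map_inj] at h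

/-- The quotient of two distinct prefix products is a product over a nonempty proper interval. -/
lemma injective_prod_Iio (ha : NoProperProdOne a) : Injective fun j => ∏ t ∈ Iio j, a t := by
  intro i j (heq : ∏ t ∈ Iio i, a t = ∏ t ∈ Iio j, a t)
  by_contra hne
  wlog hij : i < j generalizing i j
  · exact this heq.symm (Ne.symm hne) ((Ne.lt_or_gt hne).resolve_left hij)
  have hsplit := prod_sdiff (f := a) (Iio_subset_Iio hij.le)
  rw [heq, mul_eq_right] at hsplit
  refine ha _ ⟨i, by simp [hij]⟩ (fun h => ?_) hsplit
  have : j ∈ Iio j \ Iio i := h ▸ mem_univ j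
  simp at this

lemma length_le_card [Fintype H] (ha : NoProperProdOne a) : k ≤ Fintype.card H := by
  simpa using Fintype.card_le_of_injective _ ha.injective_prod_Iio

lemma bijective_prod_Iio [Fintype H] (ha : NoProperProdOne a) (hk : Fintype.card H = k) :
    Bijective fun j => ∏ t ∈ Iio j, a t :=
  (Fintype.bijective_iff_injective_and_card _).mpr ⟨ha.injective_prod_Iio, by simp [hk]⟩

end NoProperProdOne

lemma prod_Iio_comp_swap_of_ne {n : ℕ} (a : Fin (n + 1) → H) (i : Fin n) {j : Fin (n + 1)}
    (hj : j ≠ i.succ) :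
    ∏ t ∈ Iio j, a (Equiv.swap i.castSucc i.succ t) = ∏ t ∈ Iio j, a t := by
  refine prod_equiv (Equiv.swap i.castSucc i.succ) (fun t => ?_) fun _ _ => rfl
  rw [Fin.ne_iff_vne] at hj
  simp only [mem_Iio, Equiv.swap_apply_def, Fin.lt_def, Fin.ext_iff]
  split_ifs <;> simp_all <;> omega

lemma NoProperProdOne.apply_castSucc_eq_apply_succ [Fintype H] {n : ℕ} {a : Fin (n + 1) → H}
    (ha : NoProperProdOne a) (hn : Fintype.card H = n + 1) (i : Fin n) :
    a i.castSucc = a i.succ := by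
  have hswap := apply_eq_of_eqOn_compl_singleton (ha.bijective_prod_Iio hn).surjective
    (ha.comp_perm (Equiv.swap i.castSucc i.succ)).injective_prod_Iio
    fun j hj => (prod_Iio_comp_swap_of_ne a i hj).symm
  simp only [comp_apply, Fin.prod_Iio_succ, Equiv.swap_apply_left] at hswap
  rw [prod_Iio_comp_swap_of_ne a i Fin.castSucc_lt_succ.ne] at hswap
  exact mul_left_cancel hswap

lemma NoProperProdOne.eq_const [Fintype H] {n : ℕ} {a : Fin (n + 1) → H}
    (ha : NoProperProdOne a) (hn : Fintype.card H = n + 1) (i : Fin (n + 1)) : a i = a 0 := by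
  induction i using Fin.induction with
  | zero => rfl
  | succ i ih => rw [← ha.apply_castSucc_eq_apply_succ hn, ih]

lemma prod_const_eq_one_and_noProperProdOne_iff {k : ℕ} (hk : 0 < k) (g : H) :
    (∏ _ : Fin k, g = 1 ∧ NoProperProdOne fun _ : Fin k => g) ↔ orderOf g = k := by
  simp only [NoProperProdOne, prod_const, card_univ, Fintype.card_fin, orderOf_eq_iff hk]
  refine and_congr_right fun _ => ⟨fun h n hnk hn => ?_, fun h s hs hsu => ?_⟩
  · have hcard : #(Iio (⟨n, hnk⟩ : Fin k)) = n := Fin.card_Iio _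
    refine hcard ▸ h _ ⟨⟨0, hk⟩, by simpa [Fin.lt_def]⟩ fun hu => ?_
    simpa using (hu ▸ mem_univ _ : (⟨n, hnk⟩ : Fin k) ∈ Iio ⟨n, hnk⟩)
  · exact h _ (by simpa using (card_lt_iff_ne_univ s).mpr hsu) (card_pos.mpr hs)

end

/-- In a cyclic group of order `m`: every minimal product-one sequence of length `m` is
constant equal to some generator, every minimal product-one sequence has length at most
`m`, and some minimal product-one sequence of length `m` exists (so `D(C_m) = m`). -/
theorem stmt15 (H : Type*) [CommGroup H] [Fintype H] (hc : IsCyclic H) (m : ℕ)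
    (hm : Fintype.card H = m) :
    (∀ a : Fin m → H, ∏ i, a i = 1 →
        (∀ s : Finset (Fin m), s.Nonempty → s ≠ Finset.univ → ∏ i ∈ s, a i ≠ 1) →
        ∃ g : H, orderOf g = m ∧ ∀ i, a i = g) ∧
    (∀ (k : ℕ) (b : Fin k → H), ∏ i, b i = 1 →
        (∀ s : Finset (Fin k), s.Nonempty → s ≠ Finset.univ → ∏ i ∈ s, b i ≠ 1) →
        k ≤ m) ∧
    (∃ b : Fin m → H, ∏ i, b i = 1 ∧
        ∀ s : Finset (Fin m), s.Nonempty → s ≠ Finset.univ → ∏ i ∈ s, b i ≠ 1) := by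
  obtain ⟨n, rfl⟩ : ∃ n, m = n + 1 := Nat.exists_eq_succ_of_ne_zero (hm ▸ Fintype.card_ne_zero)
  refine ⟨fun a hprod hmin => ?_, fun k b _ hmin => hm ▸ NoProperProdOne.length_le_card hmin, ?_⟩
  · have hconst : a = fun _ => a 0 := funext (NoProperProdOne.eq_const hmin hm)
    rw [hconst] at hprod hmin
    exact ⟨a 0, (prod_const_eq_one_and_noProperProdOne_iff n.succ_pos _).mp ⟨hprod, hmin⟩,
      congrFun hconst⟩
  · obtain ⟨g, hg⟩ := hc.exists_generator
    have hord : orderOf g = n + 1 := by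
      rw [orderOf_eq_card_of_forall_mem_zpowers hg, Nat.card_eq_fintype_card, hm]
    exact ⟨fun _ => g, (prod_const_eq_one_and_noProperProdOne_iff n.succ_pos g).mpr hord⟩
end

section
/- A polynomial f in F_q[x] satisfies f(x + b) = f(x) for all b in F_q if and only if f(x) = g(x^q - x) for some g in F_q[x]. -/
/-!
Translation by `b` is the Taylor shift `taylor b`, and it fixes `X ^ q - X` because
`(X + b) ^ q = X ^ q + b ^ q = X ^ q + b`. Division by the monic `X ^ q - X` therefore commutes
with every shift, so quotient and remainder of an invariant `f` are again invariant. An invariant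
polynomial of degree `< q` takes the same value at all `q` points of `F_q`, hence is constant;
this applies to the remainder, and induction on the degree applies to the quotient.
-/

open Polynomial

namespace Polynomial

theorem taylor_divByMonic_and_modByMonic {R : Type*} [CommRing R] {p : R[X]} {r : R}
    (hp : p.Monic) (hpr : taylor r p = p) (f : R[X]) :
    taylor r (f /ₘ p) = taylor r f /ₘ p ∧ taylor r (f %ₘ p) = taylor r f %ₘ p := by
  nontriviality R
  have hdecomp : taylor r (f %ₘ p + p * (f /ₘ p)) = taylor r f := by rw [modByMonic_add_div]
  rw [map_add, taylor_mul, hpr] at hdecomp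
  have hdeg : (taylor r (f %ₘ p)).degree < p.degree := by
    rw [degree_taylor]
    exact degree_modByMonic_lt f hp
  obtain ⟨hdiv, hmod⟩ := div_modByMonic_unique _ _ hp ⟨hdecomp, hdeg⟩
  exact ⟨hdiv.symm, hmod.symm⟩

section FiniteField

variable {F : Type*} [Field F] [Fintype F]

theorem taylor_X_pow_card (b : F) :
    taylor b (X ^ Fintype.card F) = X ^ Fintype.card F + C b := by
  rw [taylor_X_pow, ← FiniteField.expand_card, map_add, expand_X, expand_C]

theorem taylor_X_pow_card_sub_X (b : F) :
    taylor b (X ^ Fintype.card F - X : F[X]) = X ^ Fintype.card F - X := by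
  rw [map_sub, taylor_X_pow_card, taylor_X]
  ring

theorem taylor_comp_X_pow_card_sub_X (g : F[X]) (b : F) :
    taylor b (g.comp (X ^ Fintype.card F - X)) = g.comp (X ^ Fintype.card F - X) := by
  rw [taylor_apply, comp_assoc, ← taylor_apply, taylor_X_pow_card_sub_X]

theorem monic_X_pow_card_sub_X : (X ^ Fintype.card F - X : F[X]).Monic :=
  monic_X_pow_sub (by rw [degree_X]; exact_mod_cast Fintype.one_lt_card)

theorem eq_C_of_forall_taylor_eq_self {f : F[X]} (hf : ∀ b, taylor b f = f)
    (hdeg : f.natDegree < Fintype.card F) : f = C (f.eval 0) := by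
  refine eq_of_natDegree_lt_card_of_eval_eq _ _ Function.injective_id (fun b => ?_) (by simpa)
  rw [eval_C, id, ← zero_add b, ← taylor_eval, hf]

theorem exists_eq_comp_X_pow_card_sub_X {f : F[X]} (hf : ∀ b, taylor b f = f) :
    ∃ g : F[X], f = g.comp (X ^ Fintype.card F - X) := by
  set p : F[X] := X ^ Fintype.card F - X
  have hp : p.Monic := monic_X_pow_card_sub_X
  have hpdeg : p.natDegree = Fintype.card F :=
    FiniteField.X_pow_card_sub_X_natDegree_eq F Fintype.one_lt_card
  induction hn : f.natDegree using Nat.strong_induction_on generalizing f with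
  | _ n ih =>
  have hshift (b : F) := taylor_divByMonic_and_modByMonic hp (taylor_X_pow_card_sub_X b) f
  obtain hlt | hle := lt_or_ge n (Fintype.card F)
  · exact ⟨C (f.eval 0), by rw [C_comp]; exact eq_C_of_forall_taylor_eq_self hf (hn ▸ hlt)⟩
  have hq_pos : 0 < Fintype.card F := Fintype.card_pos
  have hdiv_deg : (f /ₘ p).natDegree < n := by
    rw [natDegree_divByMonic _ hp, hpdeg]
    omega
  obtain ⟨g, hg⟩ := ih _ hdiv_deg (fun b => by rw [(hshift b).1, hf]) rfl
  have hmod : f %ₘ p = C ((f %ₘ p).eval 0) := by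
    refine eq_C_of_forall_taylor_eq_self (fun b => by rw [(hshift b).2, hf]) ?_
    rw [← hpdeg]
    exact natDegree_modByMonic_lt f hp (by rintro h; simp [h] at hpdeg; omega)
  refine ⟨X * g + C ((f %ₘ p).eval 0), ?_⟩
  rw [add_comp, mul_comp, X_comp, C_comp, ← hg, ← hmod, add_comm, modByMonic_add_div]

end FiniteField

end Polynomial

/-- `f(x + b) = f(x)` for all `b ∈ F_q` iff `f(x) = g(x^q - x)` for some `g ∈ F_q[x]`. -/
theorem stmt17 (F : Type*) [Field F] [Fintype F] (f : F[X]) :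
    (∀ b : F, f.comp (X + C b) = f) ↔
      ∃ g : F[X], f = g.comp (X ^ Fintype.card F - X) := by
  simp only [← taylor_apply]
  constructor
  · exact exists_eq_comp_X_pow_card_sub_X
  · rintro ⟨g, rfl⟩ b
    exact taylor_comp_X_pow_card_sub_X g b
end
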